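/- For every finite simple graph G there exists a finite simple graph H* and a coalition partition π* of H* such that the coalition graph CG(H*, π*) is isomorphic to G. -/

import Mathlib

open scoped Classical

/-- A dominating set (as a finset): every vertex outside `S` has a neighbor in `S`. -/
def IsDomSet {V : Type*} (G : SimpleGraph V) (S : Finset V) : Prop :=
  ∀ v, v ∉ S → ∃ u ∈ S, G.Adj u v

/-- Two (distinct) sets form a coalition: neither dominates, but their union does. -/
def IsCoalition {V : Type*} (G : SimpleGraph V) (A B : Finset V) : Prop :=
  A ≠ B ∧ ¬ IsDomSet G A ∧ ¬ IsDomSet G B ∧ IsDomSet G (A ∪ B)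

/-- A coalition partition (c-partition) of the vertex set of `G`. -/
def IsCPartition {V : Type*} [Fintype V] (G : SimpleGraph V) (π : Finset (Finset V)) : Prop :=
  (∀ A ∈ π, A.Nonempty) ∧
  (∀ A ∈ π, ∀ B ∈ π, A ≠ B → Disjoint A B) ∧
  (∀ v : V, ∃ A ∈ π, v ∈ A) ∧
  (∀ A ∈ π, (∃ v, A = {v} ∧ IsDomSet G A) ∨ ∃ B ∈ π, IsCoalition G A B)

/-- Number of distinct (unordered) coalitions in the partition `π`. -/
noncomputable def cpCount {V : Type*} [Fintype V] (G : SimpleGraph V)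
    (π : Finset (Finset V)) : ℕ :=
  ((π ×ˢ π).filter (fun p => IsCoalition G p.1 p.2)).card / 2

/-- The coalition count `c(G)`: maximum number of distinct coalitions over c-partitions. -/
noncomputable def coalitionCount {V : Type*} [Fintype V] (G : SimpleGraph V) : ℕ :=
  sSup {k | ∃ π, IsCPartition G π ∧ k = cpCount G π}

/-- The coalition number `C(G)`: maximum order of a c-partition. -/
noncomputable def coalitionNumber {V : Type*} [Fintype V] (G : SimpleGraph V) : ℕ :=
  sSup {k | ∃ π, IsCPartition G π ∧ k = π.card}

/-- The coalition graph `CG(G, π)`. -/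
def coalitionGraph {V : Type*} (G : SimpleGraph V) (π : Finset (Finset V)) :
    SimpleGraph {A // A ∈ π} where
  Adj A B := IsCoalition G A.1 B.1
  symm := by
    refine ⟨?_⟩
    rintro A B ⟨h1, h2, h3, h4⟩
    exact ⟨fun h => h1 h.symm, h3, h2, by rwa [Finset.union_comm]⟩
  loopless := by
    refine ⟨?_⟩
    rintro A ⟨h1, -⟩
    exact h1 rfl

/-- The set of full vertices (vertices of degree `n - 1`). -/
noncomputable def fullVertices {V : Type*} [Fintype V] (G : SimpleGraph V) : Finset V :=
  Finset.univ.filter (fun v => G.degree v = Fintype.card V - 1)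

/-- The domatic number: maximum order of a partition into dominating sets. -/
noncomputable def domaticNumber {V : Type*} [Fintype V] (G : SimpleGraph V) : ℕ :=
  sSup {k | ∃ P : Finset (Finset V),
    (∀ A ∈ P, A.Nonempty) ∧
    (∀ A ∈ P, ∀ B ∈ P, A ≠ B → Disjoint A B) ∧
    (∀ v : V, ∃ A ∈ P, v ∈ A) ∧
    (∀ A ∈ P, IsDomSet G A) ∧ k = P.card}

/-- The independence number of `G`. -/
noncomputable def indepNumber {V : Type*} [Fintype V] (G : SimpleGraph V) : ℕ :=
  sSup {k | ∃ s : Finset V, (∀ a ∈ s, ∀ b ∈ s, ¬ G.Adj a b) ∧ k = s.card}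

/-! Build a graph on `V ⊕ Gadget G` whose parts are the label classes, a vertex `i : V` being
labelled `i` and a gadget `(a, b, c)` (with `a ∼ c`, `a ≁ b`, `b` not isolated) labelled `c`.
The graph is complete except that each gadget `(a, b, c)` misses every vertex labelled `a` or `b`.
For a non-isolated `i` with neighbour `k`, the gadget `(i, i, k)` shows that part `i` does not
dominate, and for non-adjacent non-isolated `i, j` the gadget `(i, j, k)` shows that parts `i` and
`j` do not dominate together. For adjacent `i, j` the vertices `i, j : V` dominate, as no gadget
misses both. An isolated `i` forms a singleton part that dominates, as no gadget mentions it.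
Finally transport along `V ⊕ Gadget G ≃ Fin n`. -/

section IsoInvariance

variable {V W : Type*} {H : SimpleGraph V} {H' : SimpleGraph W}

theorem isDomSet_map_iff (f : H ≃g H') (S : Finset V) :
    IsDomSet H' (S.map f.toEquiv.toEmbedding) ↔ IsDomSet H S := by
  constructor
  · intro hdom v hv
    obtain ⟨w, hw, hadj⟩ := hdom (f v) ((Finset.mem_map' f.toEquiv.toEmbedding).not.mpr hv)
    obtain ⟨u, hu, rfl⟩ := Finset.mem_map.mp hw
    exact ⟨u, hu, f.map_adj_iff.mp hadj⟩
  · intro hdom w hw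
    obtain ⟨v, rfl⟩ := f.surjective w
    obtain ⟨u, hu, hadj⟩ := hdom v fun hv => hw (Finset.mem_map_of_mem _ hv)
    exact ⟨f u, Finset.mem_map_of_mem f.toEquiv.toEmbedding hu, f.map_adj_iff.mpr hadj⟩

theorem isCoalition_map_iff (f : H ≃g H') (A B : Finset V) :
    IsCoalition H' (A.map f.toEquiv.toEmbedding) (B.map f.toEquiv.toEmbedding) ↔
      IsCoalition H A B := by
  simp only [IsCoalition, ← Finset.map_union, isDomSet_map_iff, ne_eq, Finset.map_inj]

theorem IsCPartition.map [Fintype V] [Fintype W] {π : Finset (Finset V)} (hπ : IsCPartition H π)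
    (f : H ≃g H') : IsCPartition H' (π.map f.toEquiv.finsetCongr.toEmbedding) := by
  obtain ⟨hne, hdisj, hcover, hpart⟩ := hπ
  simp only [IsCPartition, Finset.forall_mem_map, Equiv.coe_toEmbedding, Equiv.finsetCongr_apply]
  refine ⟨fun A hA => (hne A hA).map, fun A hA B hB hAB => ?_, fun w => ?_, fun A hA => ?_⟩
  · exact Finset.disjoint_map _ |>.mpr (hdisj A hA B hB (by simpa using hAB))
  · obtain ⟨v, rfl⟩ := f.surjective w
    obtain ⟨A, hA, hv⟩ := hcover v
    exact ⟨_, Finset.mem_map_of_mem _ hA, Finset.mem_map_of_mem f.toEquiv.toEmbedding hv⟩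
  · rcases hpart A hA with ⟨v, rfl, hdom⟩ | ⟨B, hB, hco⟩
    · exact .inl ⟨f v, by simp, (isDomSet_map_iff f _).mpr hdom⟩
    · exact .inr ⟨_, Finset.mem_map_of_mem _ hB,
        by simpa using (isCoalition_map_iff f A B).mpr hco⟩

def coalitionGraphIsoMap (f : H ≃g H') (π : Finset (Finset V)) :
    coalitionGraph H π ≃g coalitionGraph H' (π.map f.toEquiv.finsetCongr.toEmbedding) where
  toEquiv := f.toEquiv.finsetCongr.subtypeEquiv fun _ => (Finset.mem_map' _).symm
  map_rel_iff' {A B} := isCoalition_map_iff f A B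

end IsoInvariance

section Realizer

variable {V : Type*} (G : SimpleGraph V)

abbrev Gadget : Type _ :=
  {t : V × V × V // G.Adj t.1 t.2.2 ∧ ¬ G.Adj t.1 t.2.1 ∧ ∃ k, G.Adj t.2.1 k}

variable {G}

def label : V ⊕ Gadget G → V
  | .inl i => i
  | .inr t => t.1.2.2

def Avoids : V ⊕ Gadget G → V → Prop
  | .inl _, _ => False
  | .inr t, i => i = t.1.1 ∨ i = t.1.2.1

theorem not_avoids_or_not_avoids {i j : V} (hij : G.Adj i j) (v : V ⊕ Gadget G) :
    ¬ Avoids v i ∨ ¬ Avoids v j := by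
  rcases v with _ | ⟨⟨a, b, c⟩, -, hab, -⟩
  · exact .inl id
  · by_contra! h
    rcases h with ⟨rfl | rfl, rfl | rfl⟩
    exacts [G.irrefl hij, hab hij, hab hij.symm, G.irrefl hij]

variable (G)

def realizer : SimpleGraph (V ⊕ Gadget G) where
  Adj u v := u ≠ v ∧ ¬ Avoids u (label v) ∧ ¬ Avoids v (label u)
  symm := ⟨fun _ _ h => ⟨h.1.symm, h.2.2, h.2.1⟩⟩
  loopless := ⟨fun _ h => h.1 rfl⟩

variable {G} in
theorem realizer_adj {u v : V ⊕ Gadget G} :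
    (realizer G).Adj u v ↔ u ≠ v ∧ ¬ Avoids u (label v) ∧ ¬ Avoids v (label u) :=
  Iff.rfl

variable {G} in
theorem realizer_adj_inl {i : V} {v : V ⊕ Gadget G} (hv : label v ≠ i) (h : ¬ Avoids v i) :
    (realizer G).Adj (.inl i) v :=
  realizer_adj.mpr ⟨by rintro rfl; exact hv rfl, id, h⟩

variable [Fintype V]

noncomputable def part (i : V) : Finset (V ⊕ Gadget G) := {w | label w = i}

variable {G}

@[simp]
theorem mem_part {i : V} {w : V ⊕ Gadget G} : w ∈ part G i ↔ label w = i := by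
  simp [part]

variable (G) in
theorem part_injective : Function.Injective (part G) := fun i j h => by
  simpa [label] using mem_part.mp (h ▸ mem_part.mpr rfl : Sum.inl i ∈ part G j)

theorem part_eq_singleton_of_isolated {i : V} (hi : ∀ k, ¬ G.Adj i k) :
    part G i = {.inl i} := by
  ext (_ | ⟨⟨a, b, c⟩, hac, -⟩)
  · simp [label, eq_comm]
  · simp only [mem_part, label, Finset.mem_singleton, reduceCtorEq, iff_false]
    rintro rfl
    exact hi a hac.symm

theorem isDomSet_part_of_isolated {i : V} (hi : ∀ k, ¬ G.Adj i k) :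
    IsDomSet (realizer G) (part G i) := by
  refine fun v hv => ⟨.inl i, mem_part.mpr rfl, realizer_adj_inl (mt mem_part.mpr hv) ?_⟩
  rcases v with _ | ⟨⟨a, b, c⟩, hac, -, k, hbk⟩
  · exact id
  · rintro (rfl | rfl)
    exacts [hi _ hac, hi _ hbk]

theorem not_isDomSet_part_union_part [DecidableEq (V ⊕ Gadget G)] {i j k : V}
    (hik : G.Adj i k) (hj : ∃ k, G.Adj j k) (hij : ¬ G.Adj i j) :
    ¬ IsDomSet (realizer G) (part G i ∪ part G j) := by
  intro hdom
  let t : Gadget G := ⟨(i, j, k), hik, hij, hj⟩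
  obtain ⟨u, hu, hadj⟩ := hdom (.inr t) <| by
    simp only [Finset.mem_union, mem_part, label, not_or]
    exact ⟨hik.ne', fun hkj => hij (hkj ▸ hik)⟩
  simp only [Finset.mem_union, mem_part] at hu
  exact (realizer_adj.mp hadj).2.2 hu

theorem not_isDomSet_part {i k : V} (hik : G.Adj i k) : ¬ IsDomSet (realizer G) (part G i) := by
  simpa using not_isDomSet_part_union_part hik ⟨k, hik⟩ G.irrefl

theorem isDomSet_part_union_part [DecidableEq (V ⊕ Gadget G)] {i j : V} (hij : G.Adj i j) :
    IsDomSet (realizer G) (part G i ∪ part G j) := by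
  intro v hv
  simp only [Finset.mem_union, mem_part, not_or] at hv
  rcases not_avoids_or_not_avoids hij v with h | h
  · exact ⟨.inl i, by simp [label], realizer_adj_inl hv.1 h⟩
  · exact ⟨.inl j, by simp [label], realizer_adj_inl hv.2 h⟩

theorem isCoalition_part_iff {i j : V} :
    IsCoalition (realizer G) (part G i) (part G j) ↔ G.Adj i j := by
  refine ⟨fun ⟨_, hi, hj, hij⟩ => ?_, fun hij => ?_⟩
  · by_contra hnij
    obtain ⟨k, hik⟩ := not_forall_not.mp fun hi' => hi (isDomSet_part_of_isolated hi')
    have hj' := not_forall_not.mp fun hj' => hj (isDomSet_part_of_isolated hj')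
    exact not_isDomSet_part_union_part hik hj' hnij (by convert hij)
  · exact ⟨(part_injective G).ne hij.ne, not_isDomSet_part hij, not_isDomSet_part hij.symm,
      by convert isDomSet_part_union_part hij⟩

variable (G)

noncomputable def parts : Finset (Finset (V ⊕ Gadget G)) := Finset.univ.image (part G)

theorem isCPartition_parts : IsCPartition (realizer G) (parts G) := by
  simp only [IsCPartition, parts, Finset.forall_mem_image, Finset.mem_univ, true_implies,
    Finset.exists_mem_image, true_and]
  refine ⟨fun i => ⟨.inl i, mem_part.mpr rfl⟩, fun i j hij => ?_,
    fun w => ⟨label w, mem_part.mpr rfl⟩, fun i => ?_⟩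
  · exact Finset.disjoint_left.mpr fun w hwi hwj =>
      hij (by rw [← mem_part.mp hwi, ← mem_part.mp hwj])
  · by_cases hi : ∃ k, G.Adj i k
    · obtain ⟨k, hik⟩ := hi
      exact .inr ⟨k, isCoalition_part_iff.mpr hik⟩
    · push Not at hi
      exact .inl ⟨.inl i, part_eq_singleton_of_isolated hi, isDomSet_part_of_isolated hi⟩

noncomputable def isoCoalitionGraphRealizer : G ≃g coalitionGraph (realizer G) (parts G) where
  toEquiv := Equiv.ofBijective
    (fun i => ⟨part G i, Finset.mem_image_of_mem _ (Finset.mem_univ i)⟩)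
    ⟨fun _ _ h => part_injective G (congrArg Subtype.val h), by
      rintro ⟨_, hA⟩
      obtain ⟨i, -, rfl⟩ := Finset.mem_image.mp hA
      exact ⟨i, rfl⟩⟩
  map_rel_iff' := isCoalition_part_iff

end Realizer

/-- For every finite simple graph `G` there exists a finite simple graph `H*`
and a coalition partition `π*` of `H*` such that `CG(H*, π*) ≅ G`. -/
theorem stmt_0 {V : Type} [Fintype V] (G : SimpleGraph V) :
    ∃ (n : ℕ) (H : SimpleGraph (Fin n)) (π : Finset (Finset (Fin n))),
      IsCPartition H π ∧ Nonempty (coalitionGraph H π ≃g G) := by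
  let f := SimpleGraph.Iso.map (Fintype.equivFin (V ⊕ Gadget G)) (realizer G)
  exact ⟨_, _, _, (isCPartition_parts G).map f,
    ⟨((isoCoalitionGraphRealizer G).trans (coalitionGraphIsoMap f _)).symm⟩⟩
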